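/- arXiv:1902.06950 — 5 statements merged into one kernel-verified Lean document; each statement's English description precedes it below -/
import Mathlib

section
/- Weak backward round tripping of biparsers is preserved by bind: if p : Bp u v is weak backward round tripping and k v : Bp u w is weak backward round tripping for every v, then p >>= k is weak backward round tripping. -/
/-- A biparser: a parser together with a printer. -/
structure Bp (u v : Type) where
  parse : List Char → v × List Char
  print : u → Option (v × List Char)

def Bp.ret {u v : Type} (x : v) : Bp u v :=
  ⟨fun s => (x, s), fun _ => some (x, [])⟩

def Bp.bind {u v w : Type} (p : Bp u v) (k : v → Bp u w) : Bp u w :=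
  ⟨fun s => (k (p.parse s).1).parse (p.parse s).2,
   fun x => (p.print x).bind (fun vs =>
     ((k vs.1).print x).map (fun ws => (ws.1, vs.2 ++ ws.2)))⟩

def Bp.comap {u u' v : Type} (f : u → Option u') (p : Bp u' v) : Bp u v :=
  ⟨p.parse, fun x => (f x).bind p.print⟩

/-- Weak backward round tripping. -/
def WeakBackward {u v : Type} (p : Bp u v) : Prop :=
  ∀ (x : u) (y : v) (s s' : List Char),
    p.print x = some (y, s) → p.parse (s ++ s') = (y, s')

/-- Weak forward round tripping. -/
def WeakForward {u v : Type} (p : Bp u v) : Prop :=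
  ∀ (x : u) (y : v) (s0 s1 s01 : List Char),
    p.parse s01 = (y, s1) → p.print x = some (y, s0) → s01 = s0 ++ s1

namespace Bp

variable {u v w : Type}

theorem parse_bind_of_parse_eq {p : Bp u v} {k : v → Bp u w} {s t : List Char} {a : v}
    (h : p.parse s = (a, t)) : (p.bind k).parse s = (k a).parse t := by
  simp only [Bp.bind, h]

theorem print_bind_eq_some_iff {p : Bp u v} {k : v → Bp u w} {x : u} {y : w} {s : List Char} :
    (p.bind k).print x = some (y, s) ↔
      ∃ a sa sb, p.print x = some (a, sa) ∧ (k a).print x = some (y, sb) ∧ s = sa ++ sb := by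
  simp only [Bp.bind, Option.bind_eq_some_iff, Option.map_eq_some_iff, Prod.exists, Prod.mk.injEq]
  constructor
  · rintro ⟨a, sa, hpa, _, sb, hkb, rfl, rfl⟩
    exact ⟨a, sa, sb, hpa, hkb, rfl⟩
  · rintro ⟨a, sa, sb, hpa, hkb, rfl⟩
    exact ⟨a, sa, hpa, y, sb, hkb, rfl, rfl⟩

end Bp

theorem weakBackward_bind (u v w : Type) (p : Bp u v) (k : v → Bp u w)
    (hp : WeakBackward p) (hk : ∀ y : v, WeakBackward (k y)) :
    WeakBackward (Bp.bind p k) := by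
  intro x y s s' h
  obtain ⟨a, sa, sb, hpa, hkb, rfl⟩ := Bp.print_bind_eq_some_iff.mp h
  calc (p.bind k).parse (sa ++ sb ++ s')
      = (k a).parse (sb ++ s') := by
        rw [List.append_assoc]
        exact Bp.parse_bind_of_parse_eq (hp x a sa (sb ++ s') hpa)
    _ = (y, s') := hk a x y sb s' hkb
end

section
/- The purification map purify p = fun u => (print p u).map Prod.fst is a monadic profunctor homomorphism from biparsers to partial functions u → Option v: purify (return x) = fun _ => some x; purify (p >>= k) u = (purify p u).bind (fun y => purify (k y) u); and purify (comap f p) = fun u => (f u).bind (purify p). -/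
/-- The purification of a biparser: its printer with the output string discarded. -/
def purify {u v : Type} (p : Bp u v) : u → Option v :=
  fun x => (p.print x).map Prod.fst

theorem purify_ret {u v : Type} (x : v) : purify (Bp.ret (u := u) x) = fun _ => some x :=
  rfl

theorem purify_bind {u v w : Type} (p : Bp u v) (k : v → Bp u w) (x : u) :
    purify (Bp.bind p k) x = (purify p x).bind (fun y => purify (k y) x) := by
  simp only [purify, Bp.bind, Option.map_bind, Option.bind_map]
  congr 1
  funext vs
  simp only [Function.comp_apply, Option.map_map]
  rfl

theorem purify_comap {u u' v : Type} (f : u → Option u') (p : Bp u' v) :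
    purify (Bp.comap f p) = fun x => (f x).bind (purify p) := by
  funext x
  simp only [purify, Bp.comap, Option.map_bind]
  rfl

theorem purify_homomorphism (u u' v w : Type) :
    (∀ (x : v), purify (Bp.ret (u := u) x) = fun _ => some x) ∧
    (∀ (p : Bp u v) (k : v → Bp u w) (x : u),
      purify (Bp.bind p k) x = (purify p x).bind (fun y => purify (k y) x)) ∧
    (∀ (f : u → Option u') (p : Bp u' v),
      purify (Bp.comap f p) = fun x => (f x).bind (purify p)) :=
  ⟨purify_ret, purify_bind, purify_comap⟩
end

section
/- Weak forward round tripping of biparsers is preserved by bind when the continuation is an injective arrow: if p : Bp u v is weak forward round tripping, k : v → Bp u w is such that each k v is weak forward round tripping, and k is an injective arrow into the parser monad and printer monad (i.e., there exists k' : w → v such that the parse and print outputs of k z determine z = k' of that output), then p >>= k is weak forward round tripping. -/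
namespace Bp

variable {u v w : Type}

theorem bind_print_eq_some {p : Bp u v} {k : v → Bp u w} {x : u} {y : w} {s : List Char} :
    (p.bind k).print x = some (y, s) ↔
      ∃ z t₀ t₁, p.print x = some (z, t₀) ∧ (k z).print x = some (y, t₁) ∧ s = t₀ ++ t₁ := by
  simp only [Bp.bind, Option.bind_eq_some_iff, Option.map_eq_some_iff, Prod.exists, Prod.mk.injEq]
  constructor
  · rintro ⟨z, t₀, hp, y', t₁, hk, rfl, rfl⟩
    exact ⟨z, t₀, t₁, hp, hk, rfl⟩
  · rintro ⟨z, t₀, t₁, hp, hk, rfl⟩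
    exact ⟨z, t₀, hp, y, t₁, hk, rfl, rfl⟩

end Bp

theorem WeakForward.bind {u v w : Type} {p : Bp u v} {k : v → Bp u w} (k' : w → v)
    (hp : WeakForward p) (hk : ∀ z, WeakForward (k z))
    (hparse : ∀ z s, z = k' ((k z).parse s).1)
    (hprint : ∀ z x y t, (k z).print x = some (y, t) → z = k' y) :
    WeakForward (p.bind k) := by
  intro x y s₀ s₁ s₀₁ hparse_bind hprint_bind
  obtain ⟨z, t₀, t₁, hpz, hkz, rfl⟩ := Bp.bind_print_eq_some.1 hprint_bind
  -- `k'` recovers the intermediate value from both `k`-outputs, so `p` parsed what it printed.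
  have hz : (p.parse s₀₁).1 = z := by
    rw [hparse (p.parse s₀₁).1 (p.parse s₀₁).2, hprint z x y t₁ hkz]
    exact congrArg k' (congrArg Prod.fst hparse_bind)
  have hkparse : (k z).parse (p.parse s₀₁).2 = (y, s₁) := hz ▸ hparse_bind
  calc s₀₁ = t₀ ++ (p.parse s₀₁).2 := hp x z t₀ _ s₀₁ (by rw [← hz]) hpz
    _ = t₀ ++ (t₁ ++ s₁) := by rw [hk z x y t₁ s₁ _ hkparse hkz]
    _ = t₀ ++ t₁ ++ s₁ := (List.append_assoc _ _ _).symm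

theorem weakForward_bind (u v w : Type) (p : Bp u v) (k : v → Bp u w)
    (hp : WeakForward p) (hk : ∀ y : v, WeakForward (k y))
    (hinj : ∃ k' : w → v,
      (∀ (z : v) (s : List Char) (w0 : w), ((k z).parse s).1 = w0 → z = k' w0) ∧
      (∀ (z : v) (x : u) (w0 : w) (t : List Char),
        (k z).print x = some (w0, t) → z = k' w0)) :
    WeakForward (Bp.bind p k) := by
  obtain ⟨k', hparse, hprint⟩ := hinj
  exact hp.bind k' hk (fun z s => hparse z s _ rfl) hprint
end

section
/- If a biparser p : Bp u u is weak forward round tripping and satisfies identity projection ((print p x).map Prod.fst = some x for all x), then p is forward round tripping: parse p s = (x, []) implies (print p x).map Prod.snd = some s. -/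
theorem weakForward_to_forward (u : Type) (p : Bp u u)
    (hp : WeakForward p)
    (hid : ∀ x : u, (p.print x).map Prod.fst = some x) :
    ∀ (x : u) (s : List Char),
      p.parse s = (x, []) → (p.print x).map Prod.snd = some s := by
  intro x s hparse
  have h := hid x
  cases hpr : p.print x with
  | none => simp [hpr] at h
  | some ys =>
    obtain ⟨y, s0⟩ := ys
    rw [hpr] at h
    simp at h
    cases h
    have := hp x x s0 [] s hparse hpr
    simp [hpr, this]
end

section
/- Weak backward round tripping of lenses is compositional: it is preserved by return, bind, and comap. Specifically: (1) return y is weak backward round tripping; (2) if l and every k v are weak backward round tripping then so is l >>= k; (3) if l is weak backward round tripping then so is comap f l. -/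
/-- A (monadic-profunctor) lens with source `s`, pre-view `u`, view `v`. -/
structure Lens (s u v : Type) where
  get : s → Option v
  put : u → s → Option ((v × s) × (s → Prop))

def Lens.ret {s u v : Type} (x : v) : Lens s u v :=
  ⟨fun _ => some x, fun _ st => some ((x, st), fun _ => True)⟩

def Lens.bind {s u v w : Type} (l : Lens s u v) (k : v → Lens s u w) : Lens s u w :=
  ⟨fun st => (l.get st).bind (fun v => (k v).get st),
   fun x st => (l.put x st).bind (fun r =>
     ((k r.1.1).put x r.1.2).map (fun r2 =>
       ((r2.1.1, r2.1.2), fun t => r.2 t ∧ r2.2 t)))⟩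

def Lens.comap {s u u' v : Type} (f : u → Option u') (l : Lens s u' v) : Lens s u v :=
  ⟨l.get, fun x st => (f x).bind (fun x' => l.put x' st)⟩

/-- Weak backward round tripping for lenses. -/
def LWeakBackward {s u v : Type} (l : Lens s u v) : Prop :=
  ∀ (x : u) (y : v) (st s0 s' : s) (p : s → Prop),
    l.put x st = some ((y, s0), p) → p s' → l.get s' = some y

theorem Lens.bind_put_eq_some_iff {s u v w : Type} (l : Lens s u v) (k : v → Lens s u w)
    (x : u) (st s0 : s) (y : w) (p : s → Prop) :
    (l.bind k).put x st = some ((y, s0), p) ↔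
      ∃ (v₁ : v) (s₁ : s) (p₁ p₂ : s → Prop), l.put x st = some ((v₁, s₁), p₁) ∧
        (k v₁).put x s₁ = some ((y, s0), p₂) ∧ p = fun t => p₁ t ∧ p₂ t := by
  simp only [Lens.bind, Option.bind_eq_some_iff, Option.map_eq_some_iff, Prod.exists,
    Prod.mk.injEq]
  constructor
  · rintro ⟨v₁, s₁, p₁, h₁, y', s0', p₂, h₂, ⟨rfl, rfl⟩, rfl⟩
    exact ⟨v₁, s₁, p₁, p₂, h₁, h₂, rfl⟩
  · rintro ⟨v₁, s₁, p₁, p₂, h₁, h₂, rfl⟩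
    exact ⟨v₁, s₁, p₁, h₁, y, s0, p₂, h₂, ⟨rfl, rfl⟩, rfl⟩

namespace LWeakBackward

theorem ret {s u v : Type} (y : v) : LWeakBackward (Lens.ret (s := s) (u := u) y) := by
  rintro x y' st s0 s' p h -
  simp only [Lens.ret, Option.some.injEq, Prod.mk.injEq] at h
  rw [← h.1.1]
  rfl

theorem bind {s u v w : Type} {l : Lens s u v} {k : v → Lens s u w} (hl : LWeakBackward l)
    (hk : ∀ y : v, LWeakBackward (k y)) : LWeakBackward (l.bind k) := by
  intro x y st s0 s' p h hp
  obtain ⟨v₁, s₁, p₁, p₂, h₁, h₂, rfl⟩ := (Lens.bind_put_eq_some_iff l k x st s0 y p).1 h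
  show (l.get s').bind (fun v => (k v).get s') = some y
  rw [hl x v₁ st s₁ s' p₁ h₁ hp.1, Option.bind_some, hk v₁ x y s₁ s0 s' p₂ h₂ hp.2]

theorem comap {s u u' v : Type} (f : u → Option u') {l : Lens s u' v} (hl : LWeakBackward l) :
    LWeakBackward (l.comap f) := by
  intro x y st s0 s' p h hp
  obtain ⟨x', -, h'⟩ := Option.bind_eq_some_iff.1 h
  exact hl x' y st s0 s' p h' hp

end LWeakBackward

theorem lens_weakBackward_compositional (s u u' v w : Type) :
    (∀ y : v, LWeakBackward (Lens.ret (s := s) (u := u) y)) ∧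
    (∀ (l : Lens s u v) (k : v → Lens s u w),
      LWeakBackward l → (∀ y : v, LWeakBackward (k y)) →
      LWeakBackward (Lens.bind l k)) ∧
    (∀ (f : u → Option u') (l : Lens s u' v),
      LWeakBackward l → LWeakBackward (Lens.comap f l)) := by
  exact ⟨LWeakBackward.ret, fun _ _ hl hk => hl.bind hk, fun f _ hl => hl.comap f⟩
end
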